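/- arXiv:2007.12625 — 7 statements merged into one kernel-verified Lean document; each statement's English description precedes it below -/
import Mathlib

section
/- For the momentum Frank–Wolfe iterates, ‖x_{t+1} − z_{t+1}‖ ≤ ηD for every t ≥ 0. -/
open scoped RealInnerProductSpace


private lemma momentum_fw_aux (η q θ D : ℝ) (hη : 0 < η) (hD : 0 < D)
    (hθ0 : 0 ≤ θ) (hθα : θ ≤ q) (hα0 : 0 ≤ 1 - q) :
    (1 - q) * ((1 - (1 + θ) * η) * (η * D) + (θ * η) * D) ≤ η * D := by
  have h3 : (1 - q) * (1 + θ) ≤ 1 := by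
    nlinarith [mul_nonneg hα0 (sub_nonneg.2 hθα), sq_nonneg q]
  have hred : (1 - q) * (1 + θ) * (1 - η) ≤ 1 := by
    nlinarith [mul_nonneg hα0 (by linarith : (0:ℝ) ≤ 1 + θ)]
  have hring : (1 - q) * ((1 - (1 + θ) * η) * (η * D) + (θ * η) * D)
      = (η * D) * ((1 - q) * (1 + θ) * (1 - η)) := by ring
  rw [hring]
  exact mul_le_of_le_one_right (by positivity) hred

/-- For the momentum Frank–Wolfe iterates, `‖x (t+1) - z (t+1)‖ ≤ η D` for every `t ≥ 0`. -/
theorem momentum_fw_momentum_error_bound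
    (d : ℕ) (hd : 1 ≤ d)
    (X : Set (EuclideanSpace ℝ (Fin d))) (hXne : X.Nonempty)
    (hXcomp : IsCompact X) (hXconv : Convex ℝ X)
    (D : ℝ) (hD : 0 < D)
    (hdiam : ∀ u ∈ X, ∀ v ∈ X, ‖u - v‖ ≤ D)
    (η : ℝ) (hη : 0 < η) (hη23 : η < 2 / 3)
    (x y z w v : ℕ → EuclideanSpace ℝ (Fin d))
    (hx0 : x 0 = z 0) (hy0 : y 0 = z 0) (hz0 : z 0 ∈ X)
    (hwX : ∀ t, w t ∈ X)
    (hwopt : ∀ t, ∀ w' ∈ X, ⟪w', -(v t)⟫ ≤ ⟪w t, -(v t)⟫)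
    (hxrec : ∀ t : ℕ, x (t + 1)
      = x t + ((1 + 1 / (((t : ℝ) + 1) * ((t : ℝ) + 2))) * η) • (w t - x t))
    (hyrec : ∀ t : ℕ, y (t + 1) = z t + η • (w t - z t))
    (hzrec : ∀ t : ℕ, z (t + 1)
      = (1 - 1 / ((t : ℝ) + 2)) • y (t + 1) + (1 / ((t : ℝ) + 2)) • x (t + 1)) :
    ∀ t : ℕ, ‖x (t + 1) - z (t + 1)‖ ≤ η * D := by
  -- basic facts about θ t and γ t
  have hθpos : ∀ t : ℕ, (0:ℝ) < 1 / (((t : ℝ) + 1) * ((t : ℝ) + 2)) := by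
    intro t
    have ht : (0:ℝ) ≤ (t:ℝ) := Nat.cast_nonneg t
    positivity
  have hθle : ∀ t : ℕ, (1:ℝ) / (((t : ℝ) + 1) * ((t : ℝ) + 2)) ≤ 1/2 := by
    intro t
    have ht : (0:ℝ) ≤ (t:ℝ) := Nat.cast_nonneg t
    rw [div_le_div_iff₀ (by nlinarith) (by norm_num)]
    nlinarith
  have hγpos : ∀ t : ℕ, (0:ℝ) < (1 + 1 / (((t : ℝ) + 1) * ((t : ℝ) + 2))) * η := by
    intro t
    have := hθpos t
    nlinarith
  have hγlt : ∀ t : ℕ, (1 + 1 / (((t : ℝ) + 1) * ((t : ℝ) + 2))) * η < 1 := by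
    intro t
    have h1 := hθpos t
    have h2 := hθle t
    nlinarith
  -- all iterates stay in X
  have hmem : ∀ t : ℕ, x t ∈ X ∧ y t ∈ X ∧ z t ∈ X := by
    intro t
    induction t with
    | zero => exact ⟨hx0 ▸ hz0, hy0 ▸ hz0, hz0⟩
    | succ t ih =>
      obtain ⟨hxX, hyX, hzX⟩ := ih
      have hxX' : x (t + 1) ∈ X := by
        rw [hxrec t]
        have hrw : x t + ((1 + 1 / (((t : ℝ) + 1) * ((t : ℝ) + 2))) * η) • (w t - x t)
            = (1 - (1 + 1 / (((t : ℝ) + 1) * ((t : ℝ) + 2))) * η) • x t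
              + ((1 + 1 / (((t : ℝ) + 1) * ((t : ℝ) + 2))) * η) • w t := by
          module
        rw [hrw]
        exact hXconv hxX (hwX t) (by linarith [hγlt t]) (le_of_lt (hγpos t)) (by ring)
      have hyX' : y (t + 1) ∈ X := by
        rw [hyrec t]
        have hrw : z t + η • (w t - z t) = (1 - η) • z t + η • w t := by module
        rw [hrw]
        exact hXconv hzX (hwX t) (by linarith) hη.le (by ring)
      have hzX' : z (t + 1) ∈ X := by
        rw [hzrec t]
        have ht : (0:ℝ) ≤ (t:ℝ) := Nat.cast_nonneg t
        have h1 : (0:ℝ) < 1 / ((t : ℝ) + 2) := by positivity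
        have h2 : (1:ℝ) / ((t : ℝ) + 2) ≤ 1 := by
          rw [div_le_one (by linarith)]; linarith
        exact hXconv hyX' hxX' (by linarith) h1.le (by ring)
      exact ⟨hxX', hyX', hzX'⟩
  -- the main bound, by induction on ‖x t - z t‖
  have key : ∀ t : ℕ, ‖x t - z t‖ ≤ η * D := by
    intro t
    induction t with
    | zero =>
      rw [hx0, sub_self, norm_zero]
      positivity
    | succ t ih =>
      have ht : (0:ℝ) ≤ (t:ℝ) := Nat.cast_nonneg t
      set θ : ℝ := 1 / (((t : ℝ) + 1) * ((t : ℝ) + 2)) with hθdef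
      have hid1 : x (t + 1) - y (t + 1)
          = (1 - (1 + θ) * η) • (x t - z t) + (θ * η) • (w t - z t) := by
        rw [hxrec t, hyrec t]
        module
      have hid2 : x (t + 1) - z (t + 1)
          = (1 - 1 / ((t : ℝ) + 2)) • (x (t + 1) - y (t + 1)) := by
        rw [hzrec t]
        module
      have hwz : ‖w t - z t‖ ≤ D := hdiam _ (hwX t) _ (hmem t).2.2
      have hθ0 : 0 ≤ θ := (hθpos t).le
      have hγ0 : (0:ℝ) ≤ 1 - (1 + θ) * η := by linarith [hγlt t]
      have hα0 : (0:ℝ) ≤ 1 - 1 / ((t : ℝ) + 2) := by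
        have h2 : (1:ℝ) / ((t : ℝ) + 2) ≤ 1 := by
          rw [div_le_one (by linarith)]; linarith
        linarith
      have hnorm1 : ‖x (t + 1) - y (t + 1)‖
          ≤ (1 - (1 + θ) * η) * (η * D) + (θ * η) * D := by
        rw [hid1]
        calc ‖(1 - (1 + θ) * η) • (x t - z t) + (θ * η) • (w t - z t)‖
            ≤ ‖(1 - (1 + θ) * η) • (x t - z t)‖ + ‖(θ * η) • (w t - z t)‖ :=
              norm_add_le _ _
          _ = |1 - (1 + θ) * η| * ‖x t - z t‖ + |θ * η| * ‖w t - z t‖ := by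
              rw [norm_smul, norm_smul, Real.norm_eq_abs, Real.norm_eq_abs]
          _ = (1 - (1 + θ) * η) * ‖x t - z t‖ + (θ * η) * ‖w t - z t‖ := by
              rw [abs_of_nonneg hγ0, abs_of_nonneg (by positivity)]
          _ ≤ (1 - (1 + θ) * η) * (η * D) + (θ * η) * D := by
              gcongr
      have hfinal : (1 - 1 / ((t : ℝ) + 2)) * ((1 - (1 + θ) * η) * (η * D) + (θ * η) * D)
          ≤ η * D := by
        have h2 : (0:ℝ) < (t:ℝ) + 2 := by linarith
        have hθα : θ ≤ 1 / ((t : ℝ) + 2) := by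
          rw [hθdef]
          apply div_le_div_of_nonneg_left (by norm_num) h2
          nlinarith
        exact momentum_fw_aux η _ θ D hη hD hθ0 hθα hα0
      calc ‖x (t + 1) - z (t + 1)‖
          = |1 - 1 / ((t : ℝ) + 2)| * ‖x (t + 1) - y (t + 1)‖ := by
            rw [hid2, norm_smul, Real.norm_eq_abs]
        _ = (1 - 1 / ((t : ℝ) + 2)) * ‖x (t + 1) - y (t + 1)‖ := by
            rw [abs_of_nonneg hα0]
        _ ≤ (1 - 1 / ((t : ℝ) + 2)) * ((1 - (1 + θ) * η) * (η * D) + (θ * η) * D) := by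
            gcongr
        _ ≤ η * D := hfinal
  intro t
  exact key (t + 1)
end

section
/- Closed-form expression for the momentum error: for every t ≥ 0, x_{t+1} − z_{t+1} = (1 − α_{t+1}) ∑_{i=0}^{t} (∏_{j=i+1}^{t} (1 − α_j)(1 − γ_j)) (γ_i − η)(w_i − z_i), where the empty product (when i = t) equals 1. -/
open scoped RealInnerProductSpace

/-- Closed-form expression for the momentum error of the momentum Frank–Wolfe iterates. -/
theorem momentum_fw_error_closed_form
    (d : ℕ) (hd : 1 ≤ d)
    (X : Set (EuclideanSpace ℝ (Fin d))) (hXne : X.Nonempty)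
    (hXcomp : IsCompact X) (hXconv : Convex ℝ X)
    (D : ℝ) (hD : 0 < D)
    (hdiam : ∀ u ∈ X, ∀ v ∈ X, ‖u - v‖ ≤ D)
    (η : ℝ) (hη : 0 < η) (hη23 : η < 2 / 3)
    (x y z w v : ℕ → EuclideanSpace ℝ (Fin d))
    (hx0 : x 0 = z 0) (hy0 : y 0 = z 0) (hz0 : z 0 ∈ X)
    (hwX : ∀ t, w t ∈ X)
    (hwopt : ∀ t, ∀ w' ∈ X, ⟪w', -(v t)⟫ ≤ ⟪w t, -(v t)⟫)
    (hxrec : ∀ t : ℕ, x (t + 1)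
      = x t + ((1 + 1 / (((t : ℝ) + 1) * ((t : ℝ) + 2))) * η) • (w t - x t))
    (hyrec : ∀ t : ℕ, y (t + 1) = z t + η • (w t - z t))
    (hzrec : ∀ t : ℕ, z (t + 1)
      = (1 - 1 / ((t : ℝ) + 2)) • y (t + 1) + (1 / ((t : ℝ) + 2)) • x (t + 1)) :
    ∀ t : ℕ, x (t + 1) - z (t + 1)
      = (1 - 1 / ((t : ℝ) + 2)) •
        ∑ i ∈ Finset.range (t + 1),
          (∏ j ∈ Finset.Icc (i + 1) t,
            ((1 - 1 / ((j : ℝ) + 1)) * (1 - (1 + 1 / (((j : ℝ) + 1) * ((j : ℝ) + 2))) * η))) •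
          (((1 + 1 / (((i : ℝ) + 1) * ((i : ℝ) + 2))) * η - η) • (w i - z i)) := by
  have key : ∀ t : ℕ, x (t + 1) - z (t + 1)
      = (1 - 1 / ((t : ℝ) + 2)) •
        ((1 - (1 + 1 / (((t : ℝ) + 1) * ((t : ℝ) + 2))) * η) • (x t - z t)
          + ((1 + 1 / (((t : ℝ) + 1) * ((t : ℝ) + 2))) * η - η) • (w t - z t)) := by
    intro t
    rw [hzrec t, hxrec t, hyrec t]
    match_scalars <;> ring
  intro t
  induction t with
  | zero =>
      rw [key 0, hx0]
      simp
  | succ t ih =>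
      rw [key (t + 1), ih]
      congr 1
      conv_rhs => rw [Finset.sum_range_succ]
      have hempty : Finset.Icc (t + 1 + 1) (t + 1) = (∅ : Finset ℕ) := by
        apply Finset.Icc_eq_empty; omega
      rw [hempty, Finset.prod_empty, one_smul]
      congr 1
      rw [Finset.smul_sum, Finset.smul_sum]
      refine Finset.sum_congr rfl fun i hi => ?_
      rw [Finset.mem_range] at hi
      rw [Finset.prod_Icc_succ_top (by omega : i + 1 ≤ t + 1)]
      rw [smul_smul, smul_smul]
      congr 1
      push_cast
      ring
end

section
/- Closed-form expression for the iterate increment: for every t ≥ 0, z_{t+1} − z_t = η(w_t − z_t) + α_{t+1} ∑_{i=0}^{t} (∏_{j=i+1}^{t} (1 − α_j)(1 − γ_j)) (γ_i − η)(w_i − z_i), where the empty product (when i = t) equals 1. -/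
open scoped RealInnerProductSpace

/-- Closed-form expression for the iterate increment of the momentum Frank–Wolfe iterates. -/
theorem momentum_fw_increment_closed_form
    (d : ℕ) (hd : 1 ≤ d)
    (X : Set (EuclideanSpace ℝ (Fin d))) (hXne : X.Nonempty)
    (hXcomp : IsCompact X) (hXconv : Convex ℝ X)
    (D : ℝ) (hD : 0 < D)
    (hdiam : ∀ u ∈ X, ∀ v ∈ X, ‖u - v‖ ≤ D)
    (η : ℝ) (hη : 0 < η) (hη23 : η < 2 / 3)
    (x y z w v : ℕ → EuclideanSpace ℝ (Fin d))
    (hx0 : x 0 = z 0) (hy0 : y 0 = z 0) (hz0 : z 0 ∈ X)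
    (hwX : ∀ t, w t ∈ X)
    (hwopt : ∀ t, ∀ w' ∈ X, ⟪w', -(v t)⟫ ≤ ⟪w t, -(v t)⟫)
    (hxrec : ∀ t : ℕ, x (t + 1)
      = x t + ((1 + 1 / (((t : ℝ) + 1) * ((t : ℝ) + 2))) * η) • (w t - x t))
    (hyrec : ∀ t : ℕ, y (t + 1) = z t + η • (w t - z t))
    (hzrec : ∀ t : ℕ, z (t + 1)
      = (1 - 1 / ((t : ℝ) + 2)) • y (t + 1) + (1 / ((t : ℝ) + 2)) • x (t + 1)) :
    ∀ t : ℕ, z (t + 1) - z t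
      = η • (w t - z t) + (1 / ((t : ℝ) + 2)) •
        ∑ i ∈ Finset.range (t + 1),
          (∏ j ∈ Finset.Icc (i + 1) t,
            ((1 - 1 / ((j : ℝ) + 1)) * (1 - (1 + 1 / (((j : ℝ) + 1) * ((j : ℝ) + 2))) * η))) •
          (((1 + 1 / (((i : ℝ) + 1) * ((i : ℝ) + 2))) * η - η) • (w i - z i)) := by
  set c : ℕ → ℝ := fun j =>
    (1 - 1 / ((j : ℝ) + 1)) * (1 - (1 + 1 / (((j : ℝ) + 1) * ((j : ℝ) + 2))) * η) with hc
  set e : ℕ → EuclideanSpace ℝ (Fin d) := fun i =>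
    ((1 + 1 / (((i : ℝ) + 1) * ((i : ℝ) + 2))) * η - η) • (w i - z i) with he
  have key : ∀ t : ℕ, x (t + 1) - y (t + 1)
      = ∑ i ∈ Finset.range (t + 1), (∏ j ∈ Finset.Icc (i + 1) t, c j) • e i := by
    intro t
    induction t with
    | zero =>
      rw [Finset.sum_range_succ, Finset.sum_range_zero, hxrec 0, hyrec 0, hx0]
      simp only [he]
      norm_num
      module
    | succ n ih =>
      have hsum : ∀ i ∈ Finset.range (n + 1),
          (∏ j ∈ Finset.Icc (i + 1) (n + 1), c j) • e i
            = c (n + 1) • ((∏ j ∈ Finset.Icc (i + 1) n, c j) • e i) := by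
        intro i hi
        rw [Finset.mem_range] at hi
        rw [Finset.prod_Icc_succ_top (by omega : i + 1 ≤ n + 1), mul_comm, mul_smul]
      rw [Finset.sum_range_succ, Finset.sum_congr rfl hsum, ← Finset.smul_sum, ← ih]
      have hempty : Finset.Icc (n + 1 + 1) (n + 1) = ∅ := by
        apply Finset.Icc_eq_empty; omega
      rw [hempty, Finset.prod_empty, one_smul]
      rw [hxrec (n + 1), hyrec (n + 1)]
      simp only [hc, he]
      rw [hzrec n]
      push_cast
      module
  intro t
  rw [← key t, hzrec t, hyrec t]
  module
end

section
/- Coordinate-wise smoothing gradient estimation error: if g : ℝ^d → ℝ is differentiable with L-Lipschitz gradient and μ > 0, then for every x ∈ ℝ^d, ‖∇̂_coo g(x) − ∇g(x)‖² ≤ L² d μ². -/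
/-! Each coordinate of the estimator is a central difference quotient. The first-order Taylor
bound `|g y - g x - ⟪∇g x, y - x⟫| ≤ L ‖y - x‖²`, a mean value estimate for `g - ⟪∇g x, ·⟫`, applied
at `x ± μ eⱼ` puts it within `L μ` of `∂ⱼ g x`; summing the `d` squared coordinate errors gives the
bound. -/

open InnerProductSpace

section LipschitzGradient

variable {F : Type*} [NormedAddCommGroup F] [InnerProductSpace ℝ F] [CompleteSpace F]
  {g : F → ℝ} {L : ℝ}

theorem abs_sub_sub_inner_gradient_le (hL : 0 ≤ L) (hdiff : Differentiable ℝ g)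
    (hLip : ∀ u v, ‖gradient g u - gradient g v‖ ≤ L * ‖u - v‖) (x y : F) :
    |g y - g x - ⟪gradient g x, y - x⟫_ℝ| ≤ L * ‖y - x‖ ^ 2 := by
  have hbound : ∀ u ∈ segment ℝ x y, ‖fderiv ℝ g u - fderiv ℝ g x‖ ≤ L * ‖y - x‖ := by
    intro u hu
    rw [← toDual_gradient, ← toDual_gradient, ← map_sub, LinearIsometryEquiv.norm_map]
    exact (hLip u x).trans (mul_le_mul_of_nonneg_left (norm_sub_le_of_mem_segment hu) hL)
  have := (convex_segment x y).norm_image_sub_le_of_norm_fderiv_le' (fun u _ => hdiff u) hbound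
    (left_mem_segment ℝ x y) (right_mem_segment ℝ x y)
  rw [inner_gradient_left, ← Real.norm_eq_abs, sq, ← mul_assoc]
  exact this

theorem abs_sub_sub_two_inner_gradient_le (hL : 0 ≤ L) (hdiff : Differentiable ℝ g)
    (hLip : ∀ u v, ‖gradient g u - gradient g v‖ ≤ L * ‖u - v‖) (x h : F) :
    |g (x + h) - g (x - h) - 2 * ⟪gradient g x, h⟫_ℝ| ≤ 2 * L * ‖h‖ ^ 2 := by
  have hplus := abs_sub_sub_inner_gradient_le hL hdiff hLip x (x + h)
  have hminus := abs_sub_sub_inner_gradient_le hL hdiff hLip x (x - h)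
  rw [add_sub_cancel_left] at hplus
  rw [sub_sub_cancel_left, inner_neg_right, norm_neg] at hminus
  calc |g (x + h) - g (x - h) - 2 * ⟪gradient g x, h⟫_ℝ|
      = |(g (x + h) - g x - ⟪gradient g x, h⟫_ℝ) - (g (x - h) - g x - -⟪gradient g x, h⟫_ℝ)| := by
        congr 1; ring
    _ ≤ L * ‖h‖ ^ 2 + L * ‖h‖ ^ 2 := (abs_sub _ _).trans (add_le_add hplus hminus)
    _ = 2 * L * ‖h‖ ^ 2 := by ring

end LipschitzGradient

theorem EuclideanSpace.norm_sq_le_of_forall_abs_apply_le {ι : Type*} [Fintype ι]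
    {v : EuclideanSpace ℝ ι} {c : ℝ} (h : ∀ i, |v i| ≤ c) :
    ‖v‖ ^ 2 ≤ Fintype.card ι * c ^ 2 := by
  rw [EuclideanSpace.real_norm_sq_eq]
  calc ∑ i, v i ^ 2 ≤ ∑ _i : ι, c ^ 2 :=
        Finset.sum_le_sum fun i _ => sq_le_sq' (abs_le.1 (h i)).1 (abs_le.1 (h i)).2
    _ = Fintype.card ι * c ^ 2 := by simp

/-- The coordinate-wise smoothing gradient estimator of `g` at `x`
with smoothing parameter `μ`. -/
noncomputable def cooGrad {d : ℕ} (g : EuclideanSpace ℝ (Fin d) → ℝ) (μ : ℝ)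
    (x : EuclideanSpace ℝ (Fin d)) : EuclideanSpace ℝ (Fin d) :=
  ∑ j : Fin d,
    ((g (x + μ • EuclideanSpace.single j 1) - g (x - μ • EuclideanSpace.single j 1)) / (2 * μ)) •
      EuclideanSpace.single j 1

theorem cooGrad_apply {d : ℕ} (g : EuclideanSpace ℝ (Fin d) → ℝ) (μ : ℝ)
    (x : EuclideanSpace ℝ (Fin d)) (j : Fin d) :
    cooGrad g μ x j =
      (g (x + μ • EuclideanSpace.single j 1) - g (x - μ • EuclideanSpace.single j 1)) / (2 * μ) := by
  simp [cooGrad, Pi.single_apply]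

theorem abs_cooGrad_sub_gradient_apply_le {d : ℕ} {g : EuclideanSpace ℝ (Fin d) → ℝ} {L μ : ℝ}
    (hL : 0 ≤ L) (hdiff : Differentiable ℝ g)
    (hLip : ∀ u v, ‖gradient g u - gradient g v‖ ≤ L * ‖u - v‖) (hμ : 0 < μ)
    (x : EuclideanSpace ℝ (Fin d)) (j : Fin d) :
    |(cooGrad g μ x - gradient g x) j| ≤ L * μ := by
  have hcentral := abs_sub_sub_two_inner_gradient_le hL hdiff hLip x (μ • EuclideanSpace.single j 1)
  rw [inner_smul_right, EuclideanSpace.inner_single_right, norm_smul, PiLp.norm_single,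
    Real.norm_eq_abs, abs_of_pos hμ] at hcentral
  simp only [one_mul, conj_trivial, norm_one, mul_one, ← mul_assoc] at hcentral
  have hμ2 : 0 < 2 * μ := by positivity
  rw [PiLp.sub_apply, cooGrad_apply, div_sub' hμ2.ne', abs_div, abs_of_pos hμ2, div_le_iff₀ hμ2]
  linarith

theorem cooGrad_error_bound_general
    (d : ℕ)
    (g : EuclideanSpace ℝ (Fin d) → ℝ)
    (L : ℝ) (hL : 0 < L)
    (hdiff : Differentiable ℝ g)
    (hLip : ∀ u v, ‖gradient g u - gradient g v‖ ≤ L * ‖u - v‖)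
    (μ : ℝ) (hμ : 0 < μ)
    (x : EuclideanSpace ℝ (Fin d)) :
    ‖cooGrad g μ x - gradient g x‖ ^ 2 ≤ L ^ 2 * d * μ ^ 2 := by
  calc ‖cooGrad g μ x - gradient g x‖ ^ 2 ≤ Fintype.card (Fin d) * (L * μ) ^ 2 :=
        EuclideanSpace.norm_sq_le_of_forall_abs_apply_le
          (abs_cooGrad_sub_gradient_apply_le hL.le hdiff hLip hμ x)
    _ = L ^ 2 * d * μ ^ 2 := by rw [Fintype.card_fin]; ring

/-- Coordinate-wise smoothing gradient estimation error:
`‖∇̂_coo g(x) − ∇g(x)‖² ≤ L² d μ²`. -/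
theorem cooGrad_error_bound
    (d : ℕ) (hd : 1 ≤ d)
    (g : EuclideanSpace ℝ (Fin d) → ℝ)
    (L : ℝ) (hL : 0 < L)
    (hdiff : Differentiable ℝ g)
    (hLip : ∀ u v, ‖gradient g u - gradient g v‖ ≤ L * ‖u - v‖)
    (μ : ℝ) (hμ : 0 < μ)
    (x : EuclideanSpace ℝ (Fin d)) :
    ‖cooGrad g μ x - gradient g x‖ ^ 2 ≤ L ^ 2 * d * μ ^ 2 :=
  cooGrad_error_bound_general d g L hL hdiff hLip μ hμ x
end

section
/- Uniform-smoothing gradient approximation: if f_β is differentiable at x ∈ ℝ^d with gradient ∇f_β(x), then ‖∇f_β(x) − ∇f(x)‖ ≤ β L d / 2. -/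
open MeasureTheory

/-- The uniform probability measure (normalized Lebesgue measure) on the closed unit
ball of `ℝ^d`. -/
noncomputable def uniformUnitBall (d : ℕ) : Measure (EuclideanSpace ℝ (Fin d)) :=
  (volume (Metric.closedBall (0 : EuclideanSpace ℝ (Fin d)) 1))⁻¹ •
    volume.restrict (Metric.closedBall (0 : EuclideanSpace ℝ (Fin d)) 1)

/-! Since `∇f` is `L`-Lipschitz, the mean value inequality bounds
`f (y + βu) - f (x + βu) - ⟪∇f x, y - x⟫` by `L (β‖u‖ + ‖y - x‖) ‖y - x‖`. Averaging over `u`,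
`f_β` is approximated by the affine map `y ↦ f_β x + ⟪∇f x, y - x⟫` with error
`(L β E‖u‖ + O(‖y - x‖)) ‖y - x‖`, so `‖∇f_β x - ∇f x‖ ≤ L β E‖u‖`, and in polar coordinates
`E‖u‖ = d / (d + 1) ≤ d / 2`. -/

open Metric Set Filter Topology InnerProductSpace

section Calculus

variable {E G : Type*} [NormedAddCommGroup E] [NormedAddCommGroup G]

theorem nonneg_of_forall_norm_sub_le_mul_norm_sub [Nontrivial E] {φ : E → G} {L : ℝ}
    (h : ∀ u v, ‖φ u - φ v‖ ≤ L * ‖u - v‖) : 0 ≤ L := by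
  obtain ⟨v, hv⟩ := exists_ne (0 : E)
  have := (norm_nonneg _).trans (h v 0)
  rw [sub_zero] at this
  exact nonneg_of_mul_nonneg_left this (norm_pos_iff.mpr hv)

section

variable {𝕜 : Type*} [NontriviallyNormedField 𝕜] [NormedSpace 𝕜 E] [NormedSpace 𝕜 G]

theorem HasFDerivAt.norm_sub_le_of_norm_sub_sub_le {F : E → G} {F' ℓ : E →L[𝕜] G} {x : E}
    (hF : HasFDerivAt F F' x) {C K : ℝ} (hC : 0 ≤ C)
    (hbound : ∀ y, ‖F y - F x - ℓ (y - x)‖ ≤ (C + K * ‖y - x‖) * ‖y - x‖) :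
    ‖F' - ℓ‖ ≤ C := by
  refine le_of_forall_pos_le_add fun ε hε => (hF.sub ℓ.hasFDerivAt).le_of_lip' (by positivity) ?_
  have hsmall : Tendsto (fun y => K * ‖y - x‖) (𝓝 x) (𝓝 0) := by
    simpa using (tendsto_norm_sub_self x).const_mul K
  filter_upwards [hsmall.eventually (Iic_mem_nhds hε)] with y hy
  calc ‖F y - ℓ y - (F x - ℓ x)‖ = ‖F y - F x - ℓ (y - x)‖ := by rw [map_sub]; abel_nf
    _ ≤ (C + K * ‖y - x‖) * ‖y - x‖ := hbound y
    _ ≤ (C + ε) * ‖y - x‖ := by gcongr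

end

variable [NormedSpace ℝ E] [NormedSpace ℝ G]

theorem norm_sub_sub_fderiv_le_of_lipschitz_fderiv {f : E → G} {L : ℝ} (hL : 0 ≤ L)
    (hf : Differentiable ℝ f) (hf' : ∀ u v, ‖fderiv ℝ f u - fderiv ℝ f v‖ ≤ L * ‖u - v‖)
    (x y z : E) :
    ‖f z - f y - fderiv ℝ f x (z - y)‖ ≤ L * (‖y - x‖ + ‖z - y‖) * ‖z - y‖ := by
  have hy : y ∈ closedBall x (‖y - x‖ + ‖z - y‖) := by
    rw [mem_closedBall, dist_eq_norm]; linarith [norm_nonneg (z - y)]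
  have hz : z ∈ closedBall x (‖y - x‖ + ‖z - y‖) := by
    rw [mem_closedBall, dist_eq_norm, add_comm]; exact norm_sub_le_norm_sub_add_norm_sub z y x
  refine (convex_closedBall _ _).norm_image_sub_le_of_norm_fderiv_le' (fun w _ => hf w)
    (fun w hw => ?_) hy hz
  rw [mem_closedBall, dist_eq_norm] at hw
  exact (hf' w x).trans (by gcongr)

variable [MeasurableSpace E] [CompleteSpace G] (μ : Measure E) [IsProbabilityMeasure μ]

theorem norm_integral_comp_add_smul_sub_sub_le {f : E → G} {L : ℝ} (hL : 0 ≤ L)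
    (hf : Differentiable ℝ f) (hf' : ∀ u v, ‖fderiv ℝ f u - fderiv ℝ f v‖ ≤ L * ‖u - v‖)
    {β : ℝ} (hint : ∀ y, Integrable (fun u => f (y + β • u)) μ)
    (hnorm : Integrable (fun u => ‖u‖) μ) (x y : E) :
    ‖∫ u, f (y + β • u) ∂μ - ∫ u, f (x + β • u) ∂μ - fderiv ℝ f x (y - x)‖ ≤
      (L * |β| * ∫ u, ‖u‖ ∂μ + L * ‖y - x‖) * ‖y - x‖ := by
  have hpoint : ∀ u, ‖f (y + β • u) - f (x + β • u) - fderiv ℝ f x (y - x)‖ ≤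
      L * |β| * ‖y - x‖ * ‖u‖ + L * ‖y - x‖ ^ 2 := by
    intro u
    have := norm_sub_sub_fderiv_le_of_lipschitz_fderiv hL hf hf' x (x + β • u) (y + β • u)
    rw [add_sub_add_right_eq_sub, add_sub_cancel_left, norm_smul, Real.norm_eq_abs] at this
    linarith
  calc _ = ‖∫ u, (f (y + β • u) - f (x + β • u) - fderiv ℝ f x (y - x)) ∂μ‖ := by
        rw [integral_sub (f := fun u => f (y + β • u) - f (x + β • u))
          ((hint y).sub (hint x)) (integrable_const _), integral_sub (hint y) (hint x),
          integral_const, probReal_univ, one_smul]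
    _ ≤ ∫ u, (L * |β| * ‖y - x‖ * ‖u‖ + L * ‖y - x‖ ^ 2) ∂μ :=
        norm_integral_le_of_norm_le ((hnorm.const_mul _).add (integrable_const _))
          (Eventually.of_forall hpoint)
    _ = _ := by
        rw [integral_add (hnorm.const_mul _) (integrable_const _), integral_const_mul,
          integral_const, probReal_univ, one_smul]
        ring

end Calculus

theorem setIntegral_Ioi_pow_smul_indicator_Iic_one {n : ℕ} (hn : 1 ≤ n) :
    ∫ r in Ioi (0 : ℝ), r ^ (n - 1) • (Iic (1 : ℝ)).indicator id r = 1 / (n + 1) := by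
  have heq : EqOn (fun r : ℝ => r ^ (n - 1) • (Iic (1 : ℝ)).indicator id r)
      ((Iic 1).indicator fun r => r ^ n) (Ioi 0) := by
    intro r _
    dsimp only
    by_cases hr : r ∈ Iic (1 : ℝ)
    · rw [indicator_of_mem hr, indicator_of_mem hr, id, smul_eq_mul, ← pow_succ,
        Nat.sub_add_cancel hn]
    · rw [indicator_of_notMem hr, indicator_of_notMem hr, smul_zero]
  rw [setIntegral_congr_fun measurableSet_Ioi heq, setIntegral_indicator measurableSet_Iic,
    Ioi_inter_Iic, ← intervalIntegral.integral_of_le zero_le_one, integral_pow]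
  simp

section Moment

variable {E : Type*} [NormedAddCommGroup E] [NormedSpace ℝ E] [FiniteDimensional ℝ E]
  [MeasurableSpace E] [BorelSpace E] [Nontrivial E] (μ : Measure E) [μ.IsAddHaarMeasure]

theorem setIntegral_closedBall_zero_one_norm :
    ∫ u in closedBall (0 : E) 1, ‖u‖ ∂μ =
      Module.finrank ℝ E / (Module.finrank ℝ E + 1) * μ.real (closedBall 0 1) := by
  have hind : (closedBall (0 : E) 1).indicator norm = fun u => (Iic (1 : ℝ)).indicator id ‖u‖ := by
    ext u
    by_cases hu : ‖u‖ ≤ 1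
    · rw [indicator_of_mem (mem_closedBall_zero_iff.mpr hu), indicator_of_mem (mem_Iic.mpr hu),
        id]
    · rw [indicator_of_notMem (mt mem_closedBall_zero_iff.mp hu),
        indicator_of_notMem (mt mem_Iic.mp hu)]
  rw [← integral_indicator measurableSet_closedBall, hind, integral_fun_norm_addHaar,
    setIntegral_Ioi_pow_smul_indicator_Iic_one Module.finrank_pos, Measure.real, Measure.real,
    Measure.addHaar_closedBall_eq_addHaar_ball, nsmul_eq_mul]
  ring

end Moment

section UniformUnitBall

variable {d : ℕ}

instance : IsProbabilityMeasure (uniformUnitBall d) := by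
  constructor
  rw [uniformUnitBall, Measure.smul_apply, Measure.restrict_apply MeasurableSet.univ,
    univ_inter, smul_eq_mul]
  exact ENNReal.inv_mul_cancel (measure_closedBall_pos volume _ one_pos).ne'
    measure_closedBall_lt_top.ne

theorem Continuous.integrable_uniformUnitBall {φ : EuclideanSpace ℝ (Fin d) → ℝ}
    (hφ : Continuous φ) : Integrable φ (uniformUnitBall d) :=
  (hφ.continuousOn.integrableOn_compact (isCompact_closedBall _ _)).smul_measure
    (ENNReal.inv_ne_top.mpr (measure_closedBall_pos volume _ one_pos).ne')

theorem integral_norm_uniformUnitBall [NeZero d] :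
    ∫ u, ‖u‖ ∂(uniformUnitBall d) = d / (d + 1) := by
  have hvol : (volume (closedBall (0 : EuclideanSpace ℝ (Fin d)) 1)).toReal ≠ 0 :=
    ENNReal.toReal_ne_zero.mpr
      ⟨(measure_closedBall_pos volume _ one_pos).ne', measure_closedBall_lt_top.ne⟩
  rw [uniformUnitBall, integral_smul_measure, setIntegral_closedBall_zero_one_norm,
    finrank_euclideanSpace_fin, ENNReal.toReal_inv, smul_eq_mul, Measure.real]
  field_simp

end UniformUnitBall

theorem uniform_smoothing_gradient_approx_general
    (d : ℕ)
    (f : EuclideanSpace ℝ (Fin d) → ℝ)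
    (L : ℝ)
    (hdiff : Differentiable ℝ f)
    (hLip : ∀ u v, ‖gradient f u - gradient f v‖ ≤ L * ‖u - v‖)
    (β : ℝ) (hβ : 0 < β)
    (x g : EuclideanSpace ℝ (Fin d))
    (hg : HasGradientAt (fun y => ∫ u, f (y + β • u) ∂(uniformUnitBall d)) g x) :
    ‖g - gradient f x‖ ≤ β * L * d / 2 := by
  obtain rfl | hd := eq_or_ne d 0
  · simp [Subsingleton.elim g (gradient f x)]
  have : NeZero d := ⟨hd⟩
  have hL : 0 ≤ L := nonneg_of_forall_norm_sub_le_mul_norm_sub hLip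
  have hf' (u v) : ‖fderiv ℝ f u - fderiv ℝ f v‖ ≤ L * ‖u - v‖ := by
    rw [← toDual_gradient, ← toDual_gradient, ← map_sub, LinearIsometryEquiv.norm_map]
    exact hLip u v
  have hint (y) : Integrable (fun u => f (y + β • u)) (uniformUnitBall d) :=
    Continuous.integrable_uniformUnitBall <|
      hdiff.continuous.comp (continuous_const.add (continuous_const_smul β))
  have key := hg.hasFDerivAt.norm_sub_le_of_norm_sub_sub_le (ℓ := fderiv ℝ f x)
    (by positivity) (norm_integral_comp_add_smul_sub_sub_le _ hL hdiff hf' hint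
      continuous_norm.integrable_uniformUnitBall x)
  rw [← toDual_gradient, ← map_sub, LinearIsometryEquiv.norm_map, abs_of_pos hβ,
    integral_norm_uniformUnitBall] at key
  calc ‖g - gradient f x‖ ≤ L * β * (d / (d + 1)) := key
    _ ≤ L * β * (d / 2) := by gcongr; linarith [show (1 : ℝ) ≤ d from mod_cast hd.bot_lt]
    _ = β * L * d / 2 := by ring

/-- Uniform-smoothing gradient approximation: if the smoothed function
`f_β(x) = E_{u ~ Unif(B)}[f(x + βu)]` has gradient `g` at `x`, then
`‖g − ∇f(x)‖ ≤ β L d / 2`. -/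
theorem uniform_smoothing_gradient_approx
    (d : ℕ) (hd : 1 ≤ d)
    (f : EuclideanSpace ℝ (Fin d) → ℝ)
    (L : ℝ) (hL : 0 < L)
    (hdiff : Differentiable ℝ f)
    (hLip : ∀ u v, ‖gradient f u - gradient f v‖ ≤ L * ‖u - v‖)
    (β : ℝ) (hβ : 0 < β)
    (x g : EuclideanSpace ℝ (Fin d))
    (hg : HasGradientAt (fun y => ∫ u, f (y + β • u) ∂(uniformUnitBall d)) g x) :
    ‖g - gradient f x‖ ≤ β * L * d / 2 :=
  uniform_smoothing_gradient_approx_general d f L hdiff hLip β hβ x g hg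
end

section
/- Cumulative momentum inner-product bound: for the momentum Frank–Wolfe iterates, for every t ≥ 0, ⟨∇f(z_t), x_t − z_t⟩ ≤ 2 t L η² D² + ηD ∑_{i=0}^{t−1} θ_i ‖∇f(z_i) − v_i‖. -/
open scoped RealInnerProductSpace
set_option maxHeartbeats 1000000

lemma aux_key {E : Type*} [AddCommGroup E] [Module ℝ E]
    (x z w x' y' z' : E) (θ α η : ℝ)
    (hx' : x' = x + ((1 + θ) * η) • (w - x))
    (hy' : y' = z + η • (w - z))
    (hz' : z' = (1 - α) • y' + α • x') :
    x' - z' = ((1 - α) * (1 - (1 + θ) * η)) • (x - z) + ((1 - α) * (θ * η)) • (w - z) := by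
  subst hx' hy' hz'; module

lemma aux_key2 {E : Type*} [AddCommGroup E] [Module ℝ E]
    (x z w x' y' z' : E) (θ α η : ℝ)
    (hx' : x' = x + ((1 + θ) * η) • (w - x))
    (hy' : y' = z + η • (w - z))
    (hz' : z' = (1 - α) • y' + α • x') :
    z' - z = ((1 - α) * η) • (w - z) + α • (x - z) + (α * ((1 + θ) * η)) • (w - x) := by
  subst hx' hy' hz'; module

lemma aux_comb {E : Type*} [AddCommGroup E] [Module ℝ E]
    (a b : E) (s t : ℝ) : s • a + t • b = s • a + t • b := rfl

/-- Cumulative momentum inner-product bound: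
`⟪∇f(z_t), x_t − z_t⟫ ≤ 2 t L η² D² + ηD ∑_{i=0}^{t-1} θ_i ‖∇f(z_i) − v_i‖`. -/
theorem momentum_fw_inner_product_bound
    (d : ℕ) (hd : 1 ≤ d)
    (X : Set (EuclideanSpace ℝ (Fin d))) (hXne : X.Nonempty)
    (hXcomp : IsCompact X) (hXconv : Convex ℝ X)
    (D : ℝ) (hD : 0 < D)
    (hdiam : ∀ u ∈ X, ∀ v ∈ X, ‖u - v‖ ≤ D)
    (f : EuclideanSpace ℝ (Fin d) → ℝ)
    (L : ℝ) (hL : 0 < L)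
    (hdiff : Differentiable ℝ f)
    (hLip : ∀ u v', ‖gradient f u - gradient f v'‖ ≤ L * ‖u - v'‖)
    (η : ℝ) (hη : 0 < η) (hη23 : η < 2 / 3)
    (x y z w v : ℕ → EuclideanSpace ℝ (Fin d))
    (hx0 : x 0 = z 0) (hy0 : y 0 = z 0) (hz0 : z 0 ∈ X)
    (hwX : ∀ t, w t ∈ X)
    (hwopt : ∀ t, ∀ w' ∈ X, ⟪w', -(v t)⟫ ≤ ⟪w t, -(v t)⟫)
    (hxrec : ∀ t : ℕ, x (t + 1)
      = x t + ((1 + 1 / (((t : ℝ) + 1) * ((t : ℝ) + 2))) * η) • (w t - x t))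
    (hyrec : ∀ t : ℕ, y (t + 1) = z t + η • (w t - z t))
    (hzrec : ∀ t : ℕ, z (t + 1)
      = (1 - 1 / ((t : ℝ) + 2)) • y (t + 1) + (1 / ((t : ℝ) + 2)) • x (t + 1))
    :
    ∀ t : ℕ, ⟪gradient f (z t), x t - z t⟫
      ≤ 2 * t * L * η ^ 2 * D ^ 2 +
        η * D * ∑ i ∈ Finset.range t,
          (1 / (((i : ℝ) + 1) * ((i : ℝ) + 2))) * ‖gradient f (z i) - v i‖ := by
  set g := gradient f with hg
  -- notation for θ and α
  set θ : ℕ → ℝ := fun t => 1 / (((t : ℝ) + 1) * ((t : ℝ) + 2)) with hθdef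
  set α : ℕ → ℝ := fun t => 1 / ((t : ℝ) + 2) with hαdef
  have htpos : ∀ t : ℕ, (0:ℝ) < ((t : ℝ) + 1) * ((t : ℝ) + 2) := by
    intro t
    have : (0:ℝ) ≤ (t:ℝ) := Nat.cast_nonneg t
    nlinarith
  have hθpos : ∀ t, 0 < θ t := fun t => by
    simp only [hθdef]; positivity
  have hθhalf : ∀ t, θ t ≤ 1/2 := by
    intro t
    have h2 : (2:ℝ) ≤ ((t : ℝ) + 1) * ((t : ℝ) + 2) := by
      have : (0:ℝ) ≤ (t:ℝ) := Nat.cast_nonneg t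
      nlinarith
    simp only [hθdef]
    rw [div_le_div_iff₀ (htpos t) (by norm_num)]
    linarith
  have hγpos : ∀ t, 0 < (1 + θ t) * η := by
    intro t; have := hθpos t; positivity
  have hγlt : ∀ t, (1 + θ t) * η < 1 := by
    intro t
    have h1 := hθpos t
    have h2 := hθhalf t
    nlinarith
  have hαpos : ∀ t : ℕ, 0 < α t := by
    intro t; simp only [hαdef]; positivity
  have hαhalf : ∀ t : ℕ, α t ≤ 1/2 := by
    intro t
    have : (0:ℝ) ≤ (t:ℝ) := Nat.cast_nonneg t
    simp only [hαdef]
    rw [div_le_div_iff₀ (by linarith) (by norm_num)]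
    linarith
  have hα1 : ∀ t : ℕ, (1:ℝ)/2 ≤ 1 - α t := fun t => by have := hαhalf t; linarith
  have hγ1 : ∀ t : ℕ, (0:ℝ) ≤ 1 - (1 + θ t) * η := fun t => by have := hγlt t; linarith
  have hθη : ∀ t : ℕ, (0:ℝ) ≤ θ t * η := fun t => mul_nonneg (hθpos t).le hη.le
  have hprod_nn : ∀ t : ℕ, (0:ℝ) ≤ (1 - α t) * (1 - (1 + θ t) * η) :=
    fun t => mul_nonneg (le_trans (by norm_num) (hα1 t)) (hγ1 t)
  have hprod_le1 : ∀ t : ℕ, (1 - α t) * (1 - (1 + θ t) * η) ≤ 1 := by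
    intro t
    have a1 : 1 - α t ≤ 1 := by have := hαpos t; linarith
    have a2 : 1 - (1 + θ t) * η ≤ 1 := by have := hγpos t; linarith
    calc (1 - α t) * (1 - (1 + θ t) * η) ≤ 1 * (1 - (1 + θ t) * η) :=
          mul_le_mul_of_nonneg_right a1 (hγ1 t)
      _ = 1 - (1 + θ t) * η := one_mul _
      _ ≤ 1 := a2
  have hprod2_nn : ∀ t : ℕ, (0:ℝ) ≤ (1 - α t) * (θ t * η) :=
    fun t => mul_nonneg (le_trans (by norm_num) (hα1 t)) (hθη t)
  have hprod2_le : ∀ t : ℕ, (1 - α t) * (θ t * η) ≤ θ t * η := by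
    intro t
    have a1 : 1 - α t ≤ 1 := by have := hαpos t; linarith
    calc (1 - α t) * (θ t * η) ≤ 1 * (θ t * η) :=
          mul_le_mul_of_nonneg_right a1 (hθη t)
      _ = θ t * η := one_mul _
  -- memberships
  have hmem : ∀ t : ℕ, x t ∈ X ∧ y t ∈ X ∧ z t ∈ X := by
    intro t
    induction t with
    | zero => exact ⟨hx0 ▸ hz0, hy0 ▸ hz0, hz0⟩
    | succ t ih =>
      obtain ⟨hxt, hyt, hzt⟩ := ih
      have hxX : x (t+1) ∈ X := by
        have hx' : x (t+1) = (1 - (1 + θ t) * η) • x t + ((1 + θ t) * η) • w t := by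
          rw [hxrec t]; simp only [hθdef]; module
        rw [hx']
        exact hXconv hxt (hwX t) (by linarith [hγlt t]) (le_of_lt (hγpos t)) (by ring)
      have hyX : y (t+1) ∈ X := by
        have hy' : y (t+1) = (1 - η) • z t + η • w t := by
          rw [hyrec t]; module
        rw [hy']
        exact hXconv hzt (hwX t) (by linarith) (le_of_lt hη) (by ring)
      have hzX : z (t+1) ∈ X := by
        rw [hzrec t]
        have hh : (1:ℝ) / ((t:ℝ) + 2) ≤ 1/2 := by
          rw [div_le_div_iff₀ (by positivity) (by norm_num)]
          have : (0:ℝ) ≤ (t:ℝ) := Nat.cast_nonneg t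
          linarith
        exact hXconv hyX hxX (by linarith) (by positivity) (by ring)
      exact ⟨hxX, hyX, hzX⟩
  -- key identity
  have hkey : ∀ t : ℕ, x (t+1) - z (t+1)
      = ((1 - α t) * (1 - (1 + θ t) * η)) • (x t - z t)
        + ((1 - α t) * (θ t * η)) • (w t - z t) := by
    intro t
    exact aux_key (x t) (z t) (w t) (x (t+1)) (y (t+1)) (z (t+1)) (θ t) (α t) η
      (hxrec t) (hyrec t) (hzrec t)
  have hkey2 : ∀ t : ℕ, z (t+1) - z t
      = ((1 - α t) * η) • (w t - z t) + α t • (x t - z t)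
        + (α t * ((1 + θ t) * η)) • (w t - x t) := by
    intro t
    exact aux_key2 (x t) (z t) (w t) (x (t+1)) (y (t+1)) (z (t+1)) (θ t) (α t) η
      (hxrec t) (hyrec t) (hzrec t)
  -- diameter bounds
  have hwz : ∀ t, ‖w t - z t‖ ≤ D := fun t => hdiam _ (hwX t) _ (hmem t).2.2
  have hwx : ∀ t, ‖w t - x t‖ ≤ D := fun t => hdiam _ (hwX t) _ (hmem t).1
  -- ‖x t - z t‖ ≤ η D (1 - 1/(t+1))
  have hxz : ∀ t : ℕ, ‖x t - z t‖ ≤ η * D * (1 - 1 / ((t:ℝ) + 1)) := by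
    intro t
    induction t with
    | zero => simp [hx0]
    | succ t ih =>
      rw [hkey t]
      have hnn1' := hprod_nn t
      have hnn2' := hprod2_nn t
      have hn : ‖((1 - α t) * (1 - (1 + θ t) * η)) • (x t - z t)
          + ((1 - α t) * (θ t * η)) • (w t - z t)‖
          ≤ ((1 - α t) * (1 - (1 + θ t) * η)) * ‖x t - z t‖
            + ((1 - α t) * (θ t * η)) * ‖w t - z t‖ := by
        calc _ ≤ ‖((1 - α t) * (1 - (1 + θ t) * η)) • (x t - z t)‖
              + ‖((1 - α t) * (θ t * η)) • (w t - z t)‖ := norm_add_le _ _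
        _ = _ := by
          rw [norm_smul, norm_smul, Real.norm_eq_abs, Real.norm_eq_abs,
            abs_of_nonneg hnn1', abs_of_nonneg hnn2']
      refine hn.trans ?_
      have h1 := hprod_le1 t
      have h2 := hprod2_le t
      have hb1 : (1 - α t) * (1 - (1 + θ t) * η) * ‖x t - z t‖
          ≤ η * D * (1 - 1 / ((t:ℝ) + 1)) := by
        calc (1 - α t) * (1 - (1 + θ t) * η) * ‖x t - z t‖
            ≤ 1 * ‖x t - z t‖ := by
              apply mul_le_mul_of_nonneg_right h1 (norm_nonneg _)
          _ = ‖x t - z t‖ := one_mul _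
          _ ≤ _ := ih
      have hb2 : (1 - α t) * (θ t * η) * ‖w t - z t‖ ≤ θ t * η * D := by
        calc (1 - α t) * (θ t * η) * ‖w t - z t‖
            ≤ θ t * η * ‖w t - z t‖ := by
              apply mul_le_mul_of_nonneg_right h2 (norm_nonneg _)
          _ ≤ θ t * η * D := by
              apply mul_le_mul_of_nonneg_left (hwz t)
              have := hθpos t; positivity
      have harith : η * D * (1 - 1 / ((t:ℝ) + 1)) + θ t * η * D
          = η * D * (1 - 1 / (((t:ℝ) + 1) + 1)) := by
        simp only [hθdef]
        have h1 : ((t:ℝ) + 1) ≠ 0 := by positivity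
        have h2 : ((t:ℝ) + 2) ≠ 0 := by positivity
        field_simp
        ring
      push_cast
      push_cast at harith
      linarith
  have hxzD : ∀ t : ℕ, ‖x t - z t‖ ≤ η * D := by
    intro t
    refine (hxz t).trans ?_
    have h1 : (0:ℝ) < (t:ℝ) + 1 := by positivity
    have h2 : (0:ℝ) ≤ 1 / ((t:ℝ)+1) := by positivity
    nlinarith [mul_nonneg (mul_nonneg hη.le hD.le) h2]
  -- ‖z (t+1) - z t‖ ≤ 2 η D
  have hzz : ∀ t : ℕ, ‖z (t+1) - z t‖ ≤ 2 * η * D := by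
    intro t
    rw [hkey2 t]
    have ha0 : (0:ℝ) ≤ 1 - α t := le_trans (by norm_num) (hα1 t)
    have hηD : (0:ℝ) ≤ η * D := mul_nonneg hη.le hD.le
    have e1 : ‖((1 - α t) * η) • (w t - z t)‖ ≤ (1 - α t) * (η * D) := by
      rw [norm_smul, Real.norm_eq_abs, abs_of_nonneg (mul_nonneg ha0 hη.le)]
      calc (1 - α t) * η * ‖w t - z t‖
          ≤ (1 - α t) * η * D :=
            mul_le_mul_of_nonneg_left (hwz t) (mul_nonneg ha0 hη.le)
        _ = (1 - α t) * (η * D) := by ring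
    have e2 : ‖α t • (x t - z t)‖ ≤ α t * (η * D) := by
      rw [norm_smul, Real.norm_eq_abs, abs_of_nonneg (le_of_lt (hαpos t))]
      exact mul_le_mul_of_nonneg_left (hxzD t) (hαpos t).le
    have e3 : ‖(α t * ((1 + θ t) * η)) • (w t - x t)‖
        ≤ (3/2) * (α t * (η * D)) := by
      rw [norm_smul, Real.norm_eq_abs,
        abs_of_nonneg (mul_nonneg (hαpos t).le (hγpos t).le)]
      calc α t * ((1 + θ t) * η) * ‖w t - x t‖
          ≤ α t * ((1 + θ t) * η) * D :=
            mul_le_mul_of_nonneg_left (hwx t)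
              (mul_nonneg (hαpos t).le (hγpos t).le)
        _ ≤ (3/2) * (α t * (η * D)) := by
            nlinarith [mul_nonneg (mul_nonneg (mul_nonneg (hαpos t).le hη.le) hD.le)
                (by linarith [hθhalf t] : (0:ℝ) ≤ 1/2 - θ t), hθpos t]
    have hq : α t * (η * D) ≤ (1/2) * (η * D) :=
      mul_le_mul_of_nonneg_right (hαhalf t) hηD
    calc ‖((1 - α t) * η) • (w t - z t) + α t • (x t - z t)
          + (α t * ((1 + θ t) * η)) • (w t - x t)‖
        ≤ ‖((1 - α t) * η) • (w t - z t) + α t • (x t - z t)‖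
          + ‖(α t * ((1 + θ t) * η)) • (w t - x t)‖ := norm_add_le _ _
      _ ≤ (‖((1 - α t) * η) • (w t - z t)‖ + ‖α t • (x t - z t)‖)
          + ‖(α t * ((1 + θ t) * η)) • (w t - x t)‖ := by
            gcongr; exact norm_add_le _ _
      _ ≤ ((1 - α t) * (η * D) + α t * (η * D)) + (3/2) * (α t * (η * D)) := by
            gcongr
      _ = η * D + (3/2) * (α t * (η * D)) := by ring
      _ ≤ η * D + (3/2) * ((1/2) * (η * D)) := by linarith
      _ ≤ 2 * η * D := by nlinarith
  -- main induction
  intro t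
  induction t with
  | zero => simp [hx0]
  | succ t ih =>
    have hzt : z t ∈ X := (hmem t).2.2
    -- ⟪v t, w t - z t⟫ ≤ 0
    have hv0 : ⟪v t, w t - z t⟫ ≤ 0 := by
      have h := hwopt t (z t) hzt
      rw [inner_neg_right, inner_neg_right] at h
      have h2 : ⟪w t, v t⟫ ≤ ⟪z t, v t⟫ := by linarith
      rw [inner_sub_right]
      rw [real_inner_comm (w t) (v t), real_inner_comm (z t) (v t)]
      linarith
    -- ⟪g (z t), w t - z t⟫ ≤ D * ‖g (z t) - v t‖
    have hgw : ⟪g (z t), w t - z t⟫ ≤ D * ‖g (z t) - v t‖ := by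
      have hsplit : ⟪g (z t), w t - z t⟫
          = ⟪v t, w t - z t⟫ + ⟪g (z t) - v t, w t - z t⟫ := by
        rw [inner_sub_left]; ring
      have hcs : ⟪g (z t) - v t, w t - z t⟫ ≤ ‖g (z t) - v t‖ * ‖w t - z t‖ :=
        real_inner_le_norm _ _
      have hb : ‖g (z t) - v t‖ * ‖w t - z t‖ ≤ ‖g (z t) - v t‖ * D :=
        mul_le_mul_of_nonneg_left (hwz t) (norm_nonneg _)
      rw [hsplit]
      have : ‖g (z t) - v t‖ * D = D * ‖g (z t) - v t‖ := mul_comm _ _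
      linarith
    -- first term expansion
    have hA : ⟪g (z t), x (t+1) - z (t+1)⟫
        = ((1 - α t) * (1 - (1 + θ t) * η)) * ⟪g (z t), x t - z t⟫
          + ((1 - α t) * (θ t * η)) * ⟪g (z t), w t - z t⟫ := by
      rw [hkey t, inner_add_right, real_inner_smul_right, real_inner_smul_right]
    -- Lipschitz error
    have hC : ⟪g (z (t+1)) - g (z t), x (t+1) - z (t+1)⟫ ≤ 2 * L * η^2 * D^2 := by
      calc ⟪g (z (t+1)) - g (z t), x (t+1) - z (t+1)⟫
          ≤ ‖g (z (t+1)) - g (z t)‖ * ‖x (t+1) - z (t+1)‖ := real_inner_le_norm _ _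
        _ ≤ (L * ‖z (t+1) - z t‖) * (η * D) := by
            apply mul_le_mul (hLip _ _) (hxzD (t+1)) (norm_nonneg _)
            positivity
        _ ≤ (L * (2 * η * D)) * (η * D) := by
            have h := hzz t
            have hηD : (0:ℝ) ≤ η * D := by positivity
            exact mul_le_mul_of_nonneg_right
              (mul_le_mul_of_nonneg_left h hL.le) hηD
        _ = 2 * L * η^2 * D^2 := by ring
    have hsplit2 : ⟪g (z (t+1)), x (t+1) - z (t+1)⟫
        = ⟪g (z t), x (t+1) - z (t+1)⟫
          + ⟪g (z (t+1)) - g (z t), x (t+1) - z (t+1)⟫ := by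
      rw [inner_sub_left]; ring
    -- bound pieces
    set S := ⟪g (z t), x t - z t⟫ with hS
    set B : ℝ := 2 * t * L * η ^ 2 * D ^ 2 +
        η * D * ∑ i ∈ Finset.range t, θ i * ‖g (z i) - v i‖ with hB
    have hBnn : 0 ≤ B := by
      rw [hB]
      have : (0:ℝ) ≤ ∑ i ∈ Finset.range t, θ i * ‖g (z i) - v i‖ := by
        apply Finset.sum_nonneg
        intro i _
        have := hθpos i
        positivity
      positivity
    have hc1nn := hprod_nn t
    have hc1le := hprod_le1 t
    have hcS : ((1 - α t) * (1 - (1 + θ t) * η)) * S ≤ B := by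
      rcases le_or_gt S 0 with hS0 | hS0
      · have : ((1 - α t) * (1 - (1 + θ t) * η)) * S ≤ 0 :=
          mul_nonpos_of_nonneg_of_nonpos hc1nn hS0
        linarith
      · calc ((1 - α t) * (1 - (1 + θ t) * η)) * S
              ≤ 1 * S := mul_le_mul_of_nonneg_right hc1le (le_of_lt hS0)
          _ = S := one_mul _
          _ ≤ B := ih
    have hc2 : ((1 - α t) * (θ t * η)) * ⟪g (z t), w t - z t⟫
        ≤ θ t * η * (D * ‖g (z t) - v t‖) := by
      have hc2nn := hprod2_nn t
      have hc2le := hprod2_le t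
      have hDnn : (0:ℝ) ≤ D * ‖g (z t) - v t‖ := by positivity
      rcases le_or_gt ⟪g (z t), w t - z t⟫ 0 with hgw0 | hgw0
      · have h1 : ((1 - α t) * (θ t * η)) * ⟪g (z t), w t - z t⟫ ≤ 0 :=
          mul_nonpos_of_nonneg_of_nonpos hc2nn hgw0
        have h2 : (0:ℝ) ≤ θ t * η * (D * ‖g (z t) - v t‖) := by
          have := hθpos t; positivity
        linarith
      · calc ((1 - α t) * (θ t * η)) * ⟪g (z t), w t - z t⟫
            ≤ (θ t * η) * ⟪g (z t), w t - z t⟫ :=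
              mul_le_mul_of_nonneg_right hc2le (le_of_lt hgw0)
          _ ≤ (θ t * η) * (D * ‖g (z t) - v t‖) := by
              apply mul_le_mul_of_nonneg_left hgw
              have := hθpos t; positivity
    -- RHS recurrence
    have hBrec : 2 * ((t:ℝ)+1) * L * η ^ 2 * D ^ 2 +
        η * D * ∑ i ∈ Finset.range (t+1), θ i * ‖g (z i) - v i‖
        = B + 2 * L * η^2 * D^2 + θ t * η * (D * ‖g (z t) - v t‖) := by
      rw [Finset.sum_range_succ, hB]
      ring
    push_cast
    calc ⟪g (z (t+1)), x (t+1) - z (t+1)⟫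
        = ((1 - α t) * (1 - (1 + θ t) * η)) * S
          + ((1 - α t) * (θ t * η)) * ⟪g (z t), w t - z t⟫
          + ⟪g (z (t+1)) - g (z t), x (t+1) - z (t+1)⟫ := by
          rw [hsplit2, hA]
      _ ≤ B + θ t * η * (D * ‖g (z t) - v t‖) + 2 * L * η^2 * D^2 := by
          have := hcS; have := hc2; have := hC; linarith
      _ = 2 * ((t:ℝ)+1) * L * η ^ 2 * D ^ 2 +
          η * D * ∑ i ∈ Finset.range (t+1), θ i * ‖g (z i) - v i‖ := by
          rw [hBrec]; ring
end

section
/- STORM-type error recursion implies polynomial decay: let a ∈ (0,1] and C > 0, and let (A_t)_{t≥0} be a sequence of nonnegative real numbers such that A_0 ≤ C, A_1 ≤ C·2^{−a}, and for every t ≥ 1, A_{t+1} ≤ (1 − (t+1)^{−a})² A_t + (2 − 2^{−a} − a) C (t+1)^{−2a}. Then A_t ≤ C (t+1)^{−a} for every t ≥ 0. -/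
open Real

lemma storm_key (a : ℝ) (ha0 : 0 < a) (ha1 : a ≤ 1) {s : ℝ} (hs : 2 ≤ s) :
    (1 - s ^ (-a)) ^ 2 * s ^ (-a) + (2 - (2:ℝ) ^ (-a) - a) * s ^ (-(2 * a))
      ≤ (s + 1) ^ (-a) := by
  have hs0 : (0:ℝ) < s := by linarith
  set x := s ^ (-a) with hx
  have hx0 : 0 < x := rpow_pos_of_pos hs0 _
  have hxle : x ≤ (2:ℝ) ^ (-a) :=
    Real.rpow_le_rpow_of_nonpos (by norm_num) hs (by linarith)
  have hx2 : s ^ (-(2 * a)) = x ^ 2 := by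
    rw [hx, ← Real.rpow_natCast (s ^ (-a)) 2, ← Real.rpow_mul hs0.le]
    ring_nf
  have hxs : s⁻¹ ≤ x := by
    have : s ^ (-(1:ℝ)) ≤ s ^ (-a) :=
      Real.rpow_le_rpow_of_exponent_le (by linarith) (by linarith)
    simpa [Real.rpow_neg_one] using this
  have step1 : (1 - x) ^ 2 * x + (2 - (2:ℝ) ^ (-a) - a) * x ^ 2 ≤ x * (1 - a * x) := by
    have hcube : x ^ 3 ≤ (2:ℝ) ^ (-a) * x ^ 2 := by nlinarith
    nlinarith
  have hinv : (0:ℝ) < s⁻¹ := by positivity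
  have hber : (1 + s⁻¹) ^ a ≤ 1 + a * s⁻¹ :=
    rpow_one_add_le_one_add_mul_self (by linarith) ha0.le ha1
  have hpos1 : (0:ℝ) < 1 + s⁻¹ := by positivity
  have hpos2 : (0:ℝ) < 1 + a * s⁻¹ := by positivity
  have h2 : (1 + a * s⁻¹)⁻¹ ≤ (1 + s⁻¹) ^ (-a) := by
    rw [Real.rpow_neg hpos1.le]
    exact inv_anti₀ (by positivity) hber
  have hsinv : s⁻¹ ≤ 2⁻¹ := by
    apply inv_anti₀ <;> linarith
  have h3 : 1 - a * s⁻¹ ≤ (1 + a * s⁻¹)⁻¹ := by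
    have := (le_div_iff₀ hpos2).mpr (show (1 - a*s⁻¹)*(1+a*s⁻¹) ≤ 1 by nlinarith [sq_nonneg (a*s⁻¹)])
    simpa [one_div] using this
  have hsp : (s + 1) ^ (-a) = x * (1 + s⁻¹) ^ (-a) := by
    rw [hx, ← Real.mul_rpow hs0.le hpos1.le]
    congr 1
    field_simp
  rw [hx2, hsp]
  have h4 : 1 - a * x ≤ 1 - a * s⁻¹ := by nlinarith
  have h5 : (1 - a * s⁻¹) ≤ (1 + s⁻¹) ^ (-a) := le_trans h3 h2
  calc (1 - x) ^ 2 * x + (2 - (2:ℝ) ^ (-a) - a) * x ^ 2 ≤ x * (1 - a * x) := step1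
    _ ≤ x * (1 + s⁻¹) ^ (-a) := by nlinarith

/-- STORM-type error recursion implies polynomial decay: if `A 0 ≤ C`, `A 1 ≤ C 2^{−a}`, and
`A (t+1) ≤ (1 − (t+1)^{−a})² A t + (2 − 2^{−a} − a) C (t+1)^{−2a}` for `t ≥ 1`, then
`A t ≤ C (t+1)^{−a}` for all `t`. -/
theorem storm_recursion_polynomial_decay
    (a C : ℝ) (ha0 : 0 < a) (ha1 : a ≤ 1) (hC : 0 < C)
    (A : ℕ → ℝ) (hA : ∀ t, 0 ≤ A t)
    (h0 : A 0 ≤ C)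
    (h1 : A 1 ≤ C * (2 : ℝ) ^ (-a))
    (hrec : ∀ t : ℕ, 1 ≤ t →
      A (t + 1) ≤ (1 - ((t : ℝ) + 1) ^ (-a)) ^ 2 * A t
        + (2 - (2 : ℝ) ^ (-a) - a) * C * ((t : ℝ) + 1) ^ (-(2 * a))) :
    ∀ t : ℕ, A t ≤ C * ((t : ℝ) + 1) ^ (-a) := by
  intro t
  induction t with
  | zero => simpa using h0
  | succ n ih =>
    cases n with
    | zero => norm_num; exact h1
    | succ m =>
      set s : ℝ := (m : ℝ) + 1 + 1 with hsdef
      have hs2 : (2:ℝ) ≤ s := by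
        have : (0:ℝ) ≤ (m:ℝ) := Nat.cast_nonneg m
        simp [hsdef]; linarith
      have hrec' := hrec (m + 1) (Nat.le_add_left 1 m)
      have hcast : ((m + 1 : ℕ) : ℝ) + 1 = s := by push_cast [hsdef]; ring
      rw [hcast] at hrec'
      rw [hcast] at ih
      have hgoal : ((m + 1 + 1 : ℕ) : ℝ) + 1 = s + 1 := by push_cast [hsdef]; ring
      rw [hgoal]
      have hsq : (0:ℝ) ≤ (1 - s ^ (-a)) ^ 2 := sq_nonneg _
      have key := storm_key a ha0 ha1 hs2
      calc A (m + 1 + 1)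
          ≤ (1 - s ^ (-a)) ^ 2 * A (m+1) + (2 - (2:ℝ) ^ (-a) - a) * C * s ^ (-(2*a)) := hrec'
        _ ≤ (1 - s ^ (-a)) ^ 2 * (C * s ^ (-a)) + (2 - (2:ℝ) ^ (-a) - a) * C * s ^ (-(2*a)) := by
            have := mul_le_mul_of_nonneg_left ih hsq
            linarith
        _ = C * ((1 - s ^ (-a)) ^ 2 * s ^ (-a) + (2 - (2:ℝ) ^ (-a) - a) * s ^ (-(2*a))) := by
            ring
        _ ≤ C * (s + 1) ^ (-a) := by
            exact mul_le_mul_of_nonneg_left key hC.le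
end
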